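/- arXiv:2605.04279 — 6 statements merged into one kernel-verified Lean document; each statement's English description precedes it below -/
import Mathlib

section
/- With the same setup as the flat case but with sphere dynamics ẋ_i = P_{x_i}^⊥(v_i) where each x_i(t) stays on the unit sphere, the total multi-head energy satisfies dE_multi/dt = (1/n) Σ_i ‖ẋ_i‖² ≥ 0. -/
open scoped RealInnerProductSpace

/-- Total multi-head energy monotonicity along sphere dynamics
`ẋ_i = P^⊥_{x_i}(v_i)`: `dE_multi/dt = (1/n) Σ_i ‖ẋ_i‖² ≥ 0`. -/
theorem total_energy_monotone_sphere {d n H : ℕ} (hn : 0 < n) (hH : 0 < H)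
    (β : ℝ) (hβ : 0 < β)
    (M : Fin H → (EuclideanSpace ℝ (Fin d) →ₗ[ℝ] EuclideanSpace ℝ (Fin d)))
    (hM : ∀ h u v, ⟪M h u, v⟫ = ⟪u, M h v⟫)
    (x : Fin n → ℝ → EuclideanSpace ℝ (Fin d)) (t : ℝ)
    -- tokens stay on the unit sphere
    (hsphere : ∀ i s, ‖x i s‖ = 1)
    (f : Fin n → Fin H → ℝ → EuclideanSpace ℝ (Fin d))
    (hf : ∀ i h s, f i h s = ∑ j : Fin n, Real.exp (β * ⟪x i s, M h (x j s)⟫) • M h (x j s))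
    (v : Fin n → ℝ → EuclideanSpace ℝ (Fin d))
    (hv : ∀ i s, v i s = ((n : ℝ)⁻¹) • ∑ h : Fin H, f i h s)
    -- sphere dynamics: ẋ_i = P^⊥_{x_i}(v_i) = v_i - ⟪v_i, x_i⟫ • x_i
    (hx : ∀ i s, HasDerivAt (x i) (v i s - ⟪v i s, x i s⟫ • x i s) s) :
    HasDerivAt
      (fun s => ∑ h : Fin H, (1 / (2 * β * (n : ℝ) ^ 2)) *
        ∑ i : Fin n, ∑ j : Fin n, Real.exp (β * ⟪x i s, M h (x j s)⟫))
      ((1 / (n : ℝ)) * ∑ i : Fin n, ‖v i t - ⟪v i t, x i t⟫ • x i t‖ ^ 2) t ∧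
    0 ≤ (1 / (n : ℝ)) * ∑ i : Fin n, ‖v i t - ⟪v i t, x i t⟫ • x i t‖ ^ 2 := by
  classical
  set p : Fin n → EuclideanSpace ℝ (Fin d) :=
    fun i => v i t - ⟪v i t, x i t⟫ • x i t with hp
  have hn' : (n : ℝ) ≠ 0 := Nat.cast_ne_zero.mpr hn.ne'
  have hβ' : β ≠ 0 := hβ.ne'
  -- abbreviation for the exponential weights at time t
  set e : Fin H → Fin n → Fin n → ℝ :=
    fun h i j => Real.exp (β * ⟪x i t, M h (x j t)⟫) with he
  -- symmetry of the weights
  have hesymm : ∀ h i j, e h i j = e h j i := by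
    intro h i j
    simp only [he]
    rw [← hM h (x j t) (x i t), real_inner_comm]
  -- derivative of each exponential term
  have key : ∀ (h : Fin H) (i j : Fin n),
      HasDerivAt (fun s => Real.exp (β * ⟪x i s, M h (x j s)⟫))
        (e h i j * (β * (⟪x i t, M h (p j)⟫ + ⟪p i, M h (x j t)⟫))) t := by
    intro h i j
    have hMx : ∀ k : Fin n, HasDerivAt (fun s => M h (x k s)) (M h (p k)) t := by
      intro k
      exact (LinearMap.toContinuousLinearMap (M h)).hasFDerivAt.comp_hasDerivAt t (hx k t)
    have hin : HasDerivAt (fun s => ⟪x i s, M h (x j s)⟫)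
        (⟪x i t, M h (p j)⟫ + ⟪p i, M h (x j t)⟫) t :=
      HasDerivAt.inner ℝ (hx i t) (hMx j)
    exact (hin.const_mul β).exp
  -- derivative of the total energy, in raw form
  have hD : HasDerivAt
      (fun s => ∑ h : Fin H, (1 / (2 * β * (n : ℝ) ^ 2)) *
        ∑ i : Fin n, ∑ j : Fin n, Real.exp (β * ⟪x i s, M h (x j s)⟫))
      (∑ h : Fin H, (1 / (2 * β * (n : ℝ) ^ 2)) *
        ∑ i : Fin n, ∑ j : Fin n,
          e h i j * (β * (⟪x i t, M h (p j)⟫ + ⟪p i, M h (x j t)⟫))) t := by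
    refine HasDerivAt.fun_sum fun h _ => ?_
    exact (HasDerivAt.fun_sum fun i _ => HasDerivAt.fun_sum fun j _ => key h i j).const_mul _
  -- self-pairing identity : ⟪p i, v i t⟫ = ‖p i‖²
  have hpin : ∀ i, ⟪p i, v i t⟫ = ‖p i‖ ^ 2 := by
    intro i
    have hx1 : ⟪x i t, x i t⟫ = (1 : ℝ) := by
      rw [real_inner_self_eq_norm_sq, hsphere i t]; norm_num
    have hpx : ⟪p i, x i t⟫ = 0 := by
      rw [hp]
      rw [inner_sub_left, real_inner_smul_left, hx1, mul_one, sub_self]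
    have hvp : v i t = p i + ⟪v i t, x i t⟫ • x i t := by
      simp [hp]
    rw [hvp, inner_add_right, real_inner_smul_right, hpx, mul_zero, add_zero,
      real_inner_self_eq_norm_sq]
  -- swap identity using symmetry of M
  have hswap : ∀ h, (∑ i : Fin n, ∑ j : Fin n, e h i j * ⟪x i t, M h (p j)⟫)
      = ∑ i : Fin n, ∑ j : Fin n, e h i j * ⟪p i, M h (x j t)⟫ := by
    intro h
    rw [Finset.sum_comm]
    refine Finset.sum_congr rfl fun i _ => Finset.sum_congr rfl fun j _ => ?_
    rw [hesymm h j i, ← hM h (x j t) (p i), real_inner_comm]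
  -- inner sum against f
  have hfe : ∀ h i, (∑ j : Fin n, e h i j * ⟪p i, M h (x j t)⟫) = ⟪p i, f i h t⟫ := by
    intro h i
    rw [hf i h t, inner_sum]
    refine Finset.sum_congr rfl fun j _ => ?_
    rw [real_inner_smul_right]
  -- identify the raw derivative with the target value
  have hval : (∑ h : Fin H, (1 / (2 * β * (n : ℝ) ^ 2)) *
        ∑ i : Fin n, ∑ j : Fin n,
          e h i j * (β * (⟪x i t, M h (p j)⟫ + ⟪p i, M h (x j t)⟫)))
      = (1 / (n : ℝ)) * ∑ i : Fin n, ‖p i‖ ^ 2 := by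
    have step1 : ∀ h, (∑ i : Fin n, ∑ j : Fin n,
        e h i j * (β * (⟪x i t, M h (p j)⟫ + ⟪p i, M h (x j t)⟫)))
        = 2 * β * ∑ i : Fin n, ⟪p i, f i h t⟫ := by
      intro h
      have expand : ∀ i j, e h i j * (β * (⟪x i t, M h (p j)⟫ + ⟪p i, M h (x j t)⟫))
          = β * (e h i j * ⟪x i t, M h (p j)⟫) + β * (e h i j * ⟪p i, M h (x j t)⟫) := by
        intro i j; ring
      simp_rw [expand, Finset.sum_add_distrib, ← Finset.mul_sum]
      rw [hswap h]
      have : (∑ i : Fin n, ∑ j : Fin n, e h i j * ⟪p i, M h (x j t)⟫)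
          = ∑ i : Fin n, ⟪p i, f i h t⟫ :=
        Finset.sum_congr rfl fun i _ => hfe h i
      rw [this]; ring
    simp_rw [step1]
    have step2 : ∀ i, (∑ h : Fin H, ⟪p i, f i h t⟫) = (n : ℝ) * ⟪p i, v i t⟫ := by
      intro i
      rw [hv i t, real_inner_smul_right, inner_sum, ← mul_assoc,
        mul_inv_cancel₀ hn', one_mul]
    calc (∑ h : Fin H, (1 / (2 * β * (n : ℝ) ^ 2)) * (2 * β * ∑ i : Fin n, ⟪p i, f i h t⟫))
        = (1 / (2 * β * (n : ℝ) ^ 2)) * (2 * β) * ∑ i : Fin n, ∑ h : Fin H, ⟪p i, f i h t⟫ := by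
          rw [Finset.sum_comm]
          rw [Finset.mul_sum]
          refine Finset.sum_congr rfl fun h _ => ?_
          ring
      _ = (1 / (n : ℝ) ^ 2) * ∑ i : Fin n, (n : ℝ) * ⟪p i, v i t⟫ := by
          simp_rw [step2]
          congr 1
          field_simp
      _ = (1 / (n : ℝ)) * ∑ i : Fin n, ‖p i‖ ^ 2 := by
          simp_rw [hpin, ← Finset.mul_sum, ← mul_assoc]
          congr 1
          field_simp
  refine ⟨hval ▸ hD, ?_⟩
  have : (0 : ℝ) ≤ ∑ i : Fin n, ‖p i‖ ^ 2 :=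
    Finset.sum_nonneg fun i _ => sq_nonneg _
  positivity
end

section
/- Let M₁,…,M_H be symmetric positive semidefinite d×d matrices satisfying M_{h'} M_h = 0 for h' ≠ h and M_h² = M_h. Along flat dynamics ẋ_i = (1/n) Σ_{h'} f_i^{h'} with f_i^h = Σ_j exp(β⟨x_i, M_h x_j⟩) M_h x_j, the per-head energy E^h = (1/(2βn²)) Σ_{i,j} exp(β⟨x_i, M_h x_j⟩) satisfies dE^h/dt = (1/n³) Σ_i ‖f_i^h‖² ≥ 0. -/
open scoped RealInnerProductSpace

/-- Flat per-head energy monotonicity under orthogonal projection heads: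
`dE^h/dt = (1/n³) Σ_i ‖f_i^h‖² ≥ 0`. -/
theorem per_head_energy_monotone_flat {d n H : ℕ} (hn : 0 < n) (hH : 0 < H)
    (β : ℝ) (hβ : 0 < β)
    (M : Fin H → (EuclideanSpace ℝ (Fin d) →ₗ[ℝ] EuclideanSpace ℝ (Fin d)))
    (hsymm : ∀ h u v, ⟪M h u, v⟫ = ⟪u, M h v⟫)
    (hpsd : ∀ h u, 0 ≤ ⟪M h u, u⟫)
    (horth : ∀ h h' : Fin H, h' ≠ h → ∀ u, M h' (M h u) = 0)
    (hproj : ∀ h u, M h (M h u) = M h u)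
    (x : Fin n → ℝ → EuclideanSpace ℝ (Fin d)) (t : ℝ)
    (f : Fin n → Fin H → ℝ → EuclideanSpace ℝ (Fin d))
    (hf : ∀ i h s, f i h s = ∑ j : Fin n, Real.exp (β * ⟪x i s, M h (x j s)⟫) • M h (x j s))
    -- flat dynamics: ẋ_i = (1/n) Σ_{h'} f_i^{h'}
    (hx : ∀ i s, HasDerivAt (x i) (((n : ℝ)⁻¹) • ∑ h' : Fin H, f i h' s) s)
    (h : Fin H) :
    HasDerivAt
      (fun s => (1 / (2 * β * (n : ℝ) ^ 2)) *
        ∑ i : Fin n, ∑ j : Fin n, Real.exp (β * ⟪x i s, M h (x j s)⟫))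
      ((1 / (n : ℝ) ^ 3) * ∑ i : Fin n, ‖f i h t‖ ^ 2) t ∧
    0 ≤ (1 / (n : ℝ) ^ 3) * ∑ i : Fin n, ‖f i h t‖ ^ 2 := by
  have hn' : (n : ℝ) ≠ 0 := Nat.cast_ne_zero.mpr hn.ne'
  have hβ' : β ≠ 0 := hβ.ne'
  -- M h applied to heads
  have hMf : ∀ i (h' : Fin H) s, M h (f i h' s) = if h' = h then f i h s else 0 := by
    intro i h' s
    rw [hf]
    by_cases hh : h' = h
    · subst hh
      simp only [map_sum, map_smul, hproj, if_true, hf]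
    · simp only [map_sum, map_smul, horth h' h (Ne.symm hh), smul_zero,
        Finset.sum_const_zero, if_neg hh]
  -- velocities
  set w : Fin n → EuclideanSpace ℝ (Fin d) :=
    fun i => ((n : ℝ)⁻¹) • ∑ h' : Fin H, f i h' t with hw
  have hMw : ∀ i, M h (w i) = ((n : ℝ)⁻¹) • f i h t := by
    intro i
    simp only [hw, map_smul, map_sum, hMf]
    rw [Finset.sum_ite_eq' Finset.univ h (fun _ => f i h t)]
    simp
  -- continuity of M h
  set L : EuclideanSpace ℝ (Fin d) →L[ℝ] EuclideanSpace ℝ (Fin d) :=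
    LinearMap.toContinuousLinearMap (M h) with hL
  have hLapp : ∀ u, L u = M h u := fun u => rfl
  -- derivative of each exponential term
  have hterm : ∀ i j : Fin n,
      HasDerivAt (fun s => Real.exp (β * ⟪x i s, M h (x j s)⟫))
        (Real.exp (β * ⟪x i t, M h (x j t)⟫) *
          (β * (⟪x i t, M h (w j)⟫ + ⟪w i, M h (x j t)⟫))) t := by
    intro i j
    have hxj : HasDerivAt (fun s => M h (x j s)) (M h (w j)) t := by
      exact L.hasFDerivAt.comp_hasDerivAt t (hx j t)
    have hin := HasDerivAt.inner ℝ (hx i t) hxj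
    exact ((hin.const_mul β).exp)
  -- derivative of the double sum
  have hsum : HasDerivAt
      (fun s => (1 / (2 * β * (n : ℝ) ^ 2)) *
        ∑ i : Fin n, ∑ j : Fin n, Real.exp (β * ⟪x i s, M h (x j s)⟫))
      ((1 / (2 * β * (n : ℝ) ^ 2)) *
        ∑ i : Fin n, ∑ j : Fin n, Real.exp (β * ⟪x i t, M h (x j t)⟫) *
          (β * (⟪x i t, M h (w j)⟫ + ⟪w i, M h (x j t)⟫))) t := by
    exact HasDerivAt.const_mul _
      (HasDerivAt.fun_sum fun i _ => HasDerivAt.fun_sum fun j _ => hterm i j)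
  -- now identify the derivative value
  have key : (1 / (2 * β * (n : ℝ) ^ 2)) *
        (∑ i : Fin n, ∑ j : Fin n, Real.exp (β * ⟪x i t, M h (x j t)⟫) *
          (β * (⟪x i t, M h (w j)⟫ + ⟪w i, M h (x j t)⟫)))
      = (1 / (n : ℝ) ^ 3) * ∑ i : Fin n, ‖f i h t‖ ^ 2 := by
    have hsplit : ∀ i j : Fin n,
        Real.exp (β * ⟪x i t, M h (x j t)⟫) *
          (β * (⟪x i t, M h (w j)⟫ + ⟪w i, M h (x j t)⟫))
        = β * (Real.exp (β * ⟪x i t, M h (x j t)⟫) * ⟪x i t, M h (w j)⟫)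
          + β * (Real.exp (β * ⟪x i t, M h (x j t)⟫) * ⟪w i, M h (x j t)⟫) := by
      intro i j; ring
    simp only [hsplit, Finset.sum_add_distrib, ← Finset.mul_sum]
    -- second piece: Σ_i Σ_j e_ij ⟪w i, M x_j⟫ = Σ_i (1/n)‖f i‖²
    have hT2 : ∀ i : Fin n,
        (∑ j : Fin n, Real.exp (β * ⟪x i t, M h (x j t)⟫) * ⟪w i, M h (x j t)⟫)
          = ((n : ℝ)⁻¹) * ‖f i h t‖ ^ 2 := by
      intro i
      have : (∑ j : Fin n, Real.exp (β * ⟪x i t, M h (x j t)⟫) * ⟪w i, M h (x j t)⟫)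
          = ⟪w i, f i h t⟫ := by
        rw [hf, inner_sum]
        exact Finset.sum_congr rfl fun j _ => (real_inner_smul_right _ _ _).symm
      rw [this]
      have hfix : f i h t = M h (f i h t) := by rw [hMf i h t]; simp
      rw [hfix, ← hsymm, hMw, real_inner_smul_left, ← hfix,
        real_inner_self_eq_norm_sq]
    -- first piece: Σ_i Σ_j e_ij ⟪x i, M (w j)⟫ = Σ_j (1/n)‖f j‖²
    have hT1 : (∑ i : Fin n, ∑ j : Fin n,
          Real.exp (β * ⟪x i t, M h (x j t)⟫) * ⟪x i t, M h (w j)⟫)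
        = ∑ j : Fin n, ((n : ℝ)⁻¹) * ‖f j h t‖ ^ 2 := by
      rw [Finset.sum_comm]
      refine Finset.sum_congr rfl fun j _ => ?_
      have hsymij : ∀ i : Fin n, ⟪x i t, M h (x j t)⟫ = ⟪x j t, M h (x i t)⟫ := by
        intro i; rw [← hsymm, real_inner_comm]
      have : (∑ i : Fin n, Real.exp (β * ⟪x i t, M h (x j t)⟫) * ⟪x i t, M h (w j)⟫)
          = ⟪w j, f j h t⟫ := by
        rw [hf, inner_sum]
        refine Finset.sum_congr rfl fun i _ => ?_
        have hswap : ∀ u v : EuclideanSpace ℝ (Fin d), ⟪u, M h v⟫ = ⟪v, M h u⟫ := by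
          intro u v; rw [← hsymm, real_inner_comm]
        rw [real_inner_smul_right, hsymij i, hswap (x i t) (w j)]
      rw [this]
      have hfix : f j h t = M h (f j h t) := by rw [hMf j h t]; simp
      rw [hfix, ← hsymm, hMw, real_inner_smul_left, ← hfix,
        real_inner_self_eq_norm_sq]
    rw [hT1]
    have : (∑ i : Fin n, ∑ j : Fin n,
        Real.exp (β * ⟪x i t, M h (x j t)⟫) * ⟪w i, M h (x j t)⟫)
        = ∑ i : Fin n, ((n : ℝ)⁻¹) * ‖f i h t‖ ^ 2 := Finset.sum_congr rfl fun i _ => hT2 i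
    have hfac : ∑ i : Fin n, ((n : ℝ)⁻¹) * ‖f i h t‖ ^ 2
        = ((n : ℝ)⁻¹) * ∑ i : Fin n, ‖f i h t‖ ^ 2 :=
      (Finset.mul_sum _ _ _).symm
    rw [this, hfac]
    field_simp
    ring
  constructor
  · rw [← key]; exact hsum
  · have : 0 ≤ ∑ i : Fin n, ‖f i h t‖ ^ 2 :=
      Finset.sum_nonneg fun i _ => sq_nonneg _
    positivity
end

section
/- Fix β > 0 and integer n ≥ 2, and let ψ(λ) = (λβ - 2)e^{λβ} - (λβ + 2)(n-1). Then ψ has a unique zero λ_c in (λ*, ∞) where λ* is the maximizer of φ(λ) = 2λ/(e^{λβ}+n-1); moreover ψ < 0 on (0, λ_c) and ψ > 0 on (λ_c, ∞), so φ is strictly concave on (0, λ_c) and strictly convex on (λ_c, ∞). -/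
open Real Set

private lemma mono_aux : StrictMonoOn (fun x : ℝ => (x - 1) * Real.exp x) (Set.Ici 0) := by
  apply strictMonoOn_of_deriv_pos (convex_Ici 0) (by fun_prop)
  intro x hx
  rw [interior_Ici] at hx
  have h : HasDerivAt (fun x : ℝ => (x - 1) * Real.exp x) (x * Real.exp x) x := by
    have h1 : HasDerivAt (fun x : ℝ => x - 1) 1 x := (hasDerivAt_id x).sub_const 1
    have := h1.fun_mul (Real.hasDerivAt_exp x)
    exact this.congr_deriv (by ring)
  rw [h.deriv]
  exact mul_pos hx (Real.exp_pos x)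

/-- The numerator `ψ(λ) = (λβ-2)e^{λβ} - (λβ+2)(n-1)` of `φ''` has a unique zero
`λ_c ∈ (λ*, ∞)`, is negative on `(0, λ_c)` and positive on `(λ_c, ∞)`, so
`φ(λ) = 2λ/(e^{λβ}+n-1)` is strictly concave on `(0, λ_c)` and strictly convex
on `(λ_c, ∞)`. -/
theorem inflection_point_exists (β : ℝ) (hβ : 0 < β) (n : ℕ) (hn : 2 ≤ n)
    (lamS : ℝ) (hpos : 0 < lamS)
    (hcrit : (1 - lamS * β) * Real.exp (lamS * β) = -((n : ℝ) - 1)) :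
    ∃ lamc : ℝ, lamS < lamc ∧
      (lamc * β - 2) * Real.exp (lamc * β) - (lamc * β + 2) * ((n : ℝ) - 1) = 0 ∧
      (∀ l : ℝ, lamS < l → l ≠ lamc →
        (l * β - 2) * Real.exp (l * β) - (l * β + 2) * ((n : ℝ) - 1) ≠ 0) ∧
      (∀ l ∈ Set.Ioo (0 : ℝ) lamc,
        (l * β - 2) * Real.exp (l * β) - (l * β + 2) * ((n : ℝ) - 1) < 0) ∧
      (∀ l ∈ Set.Ioi lamc,
        0 < (l * β - 2) * Real.exp (l * β) - (l * β + 2) * ((n : ℝ) - 1)) ∧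
      StrictConcaveOn ℝ (Set.Ioo 0 lamc) (fun l : ℝ => 2 * l / (Real.exp (l * β) + n - 1)) ∧
      StrictConvexOn ℝ (Set.Ioi lamc) (fun l : ℝ => 2 * l / (Real.exp (l * β) + n - 1)) := by
  have hn2 : (2 : ℝ) ≤ (n : ℝ) := by exact_mod_cast hn
  set c : ℝ := (n : ℝ) - 1 with hc_def
  have hc : (1 : ℝ) ≤ c := by simp only [hc_def]; linarith
  set s : ℝ := lamS * β with hs_def
  have hs0 : 0 < s := mul_pos hpos hβ
  have hcrit' : (s - 1) * Real.exp s = c := by nlinarith [Real.exp_pos s]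
  have hs1 : 1 < s := by nlinarith [Real.exp_pos s]
  set g : ℝ → ℝ := fun x => (x - 2) * Real.exp x - (x + 2) * c with hg_def
  have hgs_neg : g s < 0 := by
    have : g s = -s ^ 2 * Real.exp s := by
      simp only [hg_def]; linear_combination (s + 2) * hcrit'
    rw [this]
    nlinarith [Real.exp_pos s]
  have hgderiv : ∀ x : ℝ, HasDerivAt g ((x - 1) * Real.exp x - c) x := by
    intro x
    have h1 : HasDerivAt (fun x : ℝ => (x - 2) * Real.exp x) ((x - 1) * Real.exp x) x := by
      have := ((hasDerivAt_id x).sub_const 2).fun_mul (Real.hasDerivAt_exp x)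
      simp only [id_eq] at this
      exact this.congr_deriv (by ring)
    have h2 : HasDerivAt (fun x : ℝ => (x + 2) * c) c x := by
      have := ((hasDerivAt_id x).add_const 2).mul_const c
      simp only [id_eq] at this
      exact this.congr_deriv (by ring)
    exact h1.sub h2
  have hgcont : Continuous g := by fun_prop
  -- g strictly decreasing on [0, s]
  have hanti : StrictAntiOn g (Set.Icc 0 s) := by
    apply strictAntiOn_of_deriv_neg (convex_Icc 0 s) hgcont.continuousOn
    intro x hx
    rw [interior_Icc] at hx
    rw [(hgderiv x).deriv]
    have hlt := mono_aux (Set.mem_Ici.mpr hx.1.le) (Set.mem_Ici.mpr hs0.le) hx.2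
    simp only at hlt
    linarith [hcrit' ▸ hlt]
  -- g strictly increasing on [s, ∞)
  have hmono : StrictMonoOn g (Set.Ici s) := by
    apply strictMonoOn_of_deriv_pos (convex_Ici s) hgcont.continuousOn
    intro x hx
    rw [interior_Ici] at hx
    rw [(hgderiv x).deriv]
    have hlt := mono_aux (Set.mem_Ici.mpr hs0.le) (Set.mem_Ici.mpr (hs0.trans hx).le) hx
    simp only at hlt
    linarith [hcrit' ▸ hlt]
  -- a point where g is positive
  set M : ℝ := s + c + 5 with hM_def
  have hsM : s < M := by simp only [hM_def]; linarith
  have hgM : 0 < g M := by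
    have hM3 : (3 : ℝ) ≤ M := by simp only [hM_def]; linarith
    have hexp : M + 1 ≤ Real.exp M := by linarith [Real.add_one_le_exp M]
    simp only [hg_def]
    nlinarith [Real.exp_pos M]
  -- intermediate value
  obtain ⟨xc, hxc_mem, hxc_zero⟩ : ∃ xc ∈ Set.Ioo s M, g xc = 0 := by
    have h := intermediate_value_Ioo hsM.le hgcont.continuousOn
    have h0 : (0 : ℝ) ∈ Set.Ioo (g s) (g M) := ⟨hgs_neg, hgM⟩
    obtain ⟨xc, hmem, heq⟩ := h h0
    exact ⟨xc, hmem, heq⟩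
  have hsxc : s < xc := hxc_mem.1
  -- sign facts at the x level
  have hneg_x : ∀ x : ℝ, 0 < x → x < xc → g x < 0 := by
    intro x hx0 hxxc
    rcases le_or_gt x s with h | h
    · have := hanti (Set.mem_Icc.mpr ⟨le_refl 0, hs0.le⟩) (Set.mem_Icc.mpr ⟨hx0.le, h⟩) hx0
      have hg0 : g 0 < 0 := by simp only [hg_def]; nlinarith [Real.exp_zero]
      linarith
    · have h2 := hmono (Set.mem_Ici.mpr h.le) (Set.mem_Ici.mpr (h.trans hxxc).le) hxxc
      rw [hxc_zero] at h2
      exact h2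
  have hpos_x : ∀ x : ℝ, xc < x → 0 < g x := by
    intro x hx
    have := hmono (Set.mem_Ici.mpr hsxc.le) (Set.mem_Ici.mpr (hsxc.trans hx).le) hx
    rw [hxc_zero] at this
    exact this
    -- pass to l-level
  refine ⟨xc / β, (lt_div_iff₀ hβ).mpr hsxc, ?_, ?_, ?_, ?_, ?_, ?_⟩
  · show g (xc / β * β) = 0
    rw [div_mul_cancel₀ _ hβ.ne']
    exact hxc_zero
  · intro l hl hne
    show g (l * β) ≠ 0
    have hx : s < l * β := by
      simp only [hs_def]
      exact mul_lt_mul_of_pos_right hl hβ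
    have hxne : l * β ≠ xc := by
      intro h
      exact hne (by field_simp [h]; exact h)
    rcases lt_or_gt_of_ne hxne with h | h
    · have h2 := hmono (Set.mem_Ici.mpr hx.le) (Set.mem_Ici.mpr hsxc.le) h
      rw [hxc_zero] at h2
      exact h2.ne
    · exact (hpos_x _ h).ne'
  · rintro l ⟨hl0, hl1⟩
    exact hneg_x (l * β) (mul_pos hl0 hβ) ((lt_div_iff₀ hβ).mp hl1)
  · intro l hl
    exact hpos_x (l * β) ((div_lt_iff₀ hβ).mp hl)
  -- derivative computations for φ
  all_goals {
    have hD : ∀ l : ℝ, 0 < Real.exp (l * β) + (n : ℝ) - 1 := by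
      intro l
      nlinarith [Real.exp_pos (l * β)]
    have hE : ∀ l : ℝ, HasDerivAt (fun l : ℝ => Real.exp (l * β)) (β * Real.exp (l * β)) l := by
      intro l
      have := ((hasDerivAt_id l).mul_const β).exp
      simp only [id_eq] at this
      convert this using 1
      ring
    have hDd : ∀ l : ℝ, HasDerivAt (fun l : ℝ => Real.exp (l * β) + (n : ℝ) - 1)
        (β * Real.exp (l * β)) l := fun l => ((hE l).add_const _).sub_const 1
    have hf1 : ∀ l : ℝ, HasDerivAt (fun l : ℝ => 2 * l / (Real.exp (l * β) + (n : ℝ) - 1))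
        ((2 * (Real.exp (l * β) + (n : ℝ) - 1) - 2 * l * (β * Real.exp (l * β))) /
          (Real.exp (l * β) + (n : ℝ) - 1) ^ 2) l := by
      intro l
      have hnum : HasDerivAt (fun l : ℝ => 2 * l) 2 l := by
        simpa using (hasDerivAt_id l).const_mul 2
      have := hnum.fun_div (hDd l) (hD l).ne'
      convert this using 1
    have hf2 : ∀ l : ℝ, HasDerivAt (fun l : ℝ =>
        (2 * (Real.exp (l * β) + (n : ℝ) - 1) - 2 * l * (β * Real.exp (l * β))) /
          (Real.exp (l * β) + (n : ℝ) - 1) ^ 2)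
        (2 * β * Real.exp (l * β) *
          ((l * β - 2) * Real.exp (l * β) - (l * β + 2) * c) /
          (Real.exp (l * β) + (n : ℝ) - 1) ^ 3) l := by
      intro l
      have hN : HasDerivAt (fun l : ℝ =>
          2 * (Real.exp (l * β) + (n : ℝ) - 1) - 2 * l * (β * Real.exp (l * β)))
          (2 * (β * Real.exp (l * β)) -
            (2 * (β * Real.exp (l * β)) + 2 * l * (β * (β * Real.exp (l * β))))) l := by
        have h1 := (hDd l).const_mul 2
        have h2a : HasDerivAt (fun l : ℝ => 2 * l) 2 l := by
          simpa using (hasDerivAt_id l).const_mul 2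
        have h2b := (hE l).const_mul β
        have h2 := h2a.fun_mul h2b
        have := h1.fun_sub h2
        convert this using 1
      have hDen : HasDerivAt (fun l : ℝ => (Real.exp (l * β) + (n : ℝ) - 1) ^ 2)
          (2 * (Real.exp (l * β) + (n : ℝ) - 1) ^ 1 * (β * Real.exp (l * β))) l := by
        simpa using (hDd l).fun_pow 2
      have := hN.fun_div hDen (pow_ne_zero 2 (hD l).ne')
      refine this.congr_deriv ?_
      have hDne := (hD l).ne'
      field_simp
      ring
    have hderiv_f : deriv (fun l : ℝ => 2 * l / (Real.exp (l * β) + (n : ℝ) - 1)) =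
        fun l : ℝ => (2 * (Real.exp (l * β) + (n : ℝ) - 1) - 2 * l * (β * Real.exp (l * β))) /
          (Real.exp (l * β) + (n : ℝ) - 1) ^ 2 := funext fun l => (hf1 l).deriv
    have hcontf : ContinuousOn (fun l : ℝ => 2 * l / (Real.exp (l * β) + (n : ℝ) - 1)) Set.univ := by
      apply Continuous.continuousOn
      exact (continuous_const.mul continuous_id).div (by fun_prop) (fun l => (hD l).ne')
    first
    | · apply strictConcaveOn_of_deriv2_neg (convex_Ioo _ _) (hcontf.mono (Set.subset_univ _))
        intro x hx
        rw [interior_Ioo] at hx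
        show deriv (deriv (fun l : ℝ => 2 * l / (Real.exp (l * β) + (n : ℝ) - 1))) x < 0
        rw [hderiv_f, (hf2 x).deriv]
        have hψ : (x * β - 2) * Real.exp (x * β) - (x * β + 2) * c < 0 :=
          hneg_x (x * β) (mul_pos hx.1 hβ) ((lt_div_iff₀ hβ).mp hx.2)
        apply div_neg_of_neg_of_pos
        · exact mul_neg_of_pos_of_neg (by positivity) hψ
        · exact pow_pos (hD x) 3
    | · apply strictConvexOn_of_deriv2_pos (convex_Ioi _) (hcontf.mono (Set.subset_univ _))
        intro x hx
        rw [interior_Ioi] at hx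
        show 0 < deriv (deriv (fun l : ℝ => 2 * l / (Real.exp (l * β) + (n : ℝ) - 1))) x
        rw [hderiv_f, (hf2 x).deriv]
        have hψ : 0 < (x * β - 2) * Real.exp (x * β) - (x * β + 2) * c :=
          hpos_x (x * β) ((div_lt_iff₀ hβ).mp hx)
        apply div_pos
        · exact mul_pos (by positivity) hψ
        · exact pow_pos (hD x) 3
  }
end

section
/- Fix β > 0, integer n ≥ 2, and let φ(λ) = 2λ/(e^{λβ} + n - 1) with inflection point λ_c (unique zero of (λβ-2)e^{λβ} - (λβ+2)(n-1) on (λ*,∞)). If λ₁,…,λ_H > λ_c are not all equal and λ̄ = (1/H)Σ λ_h, then Σ_h φ(λ_h) > H φ(λ̄). -/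
open Finset

section Aux

variable (β : ℝ) (c : ℝ)

noncomputable def phi (x : ℝ) : ℝ := 2 * x / (Real.exp (x * β) + c)
noncomputable def phi' (x : ℝ) : ℝ :=
  (2 * (Real.exp (x * β) + c) - 2 * x * (β * Real.exp (x * β))) / (Real.exp (x * β) + c) ^ 2

lemma hasDerivAt_E (x : ℝ) : HasDerivAt (fun y : ℝ => Real.exp (y * β)) (β * Real.exp (x * β)) x := by
  have h := (Real.hasDerivAt_exp (x * β)).comp x ((hasDerivAt_id x).mul_const β)
  simpa [mul_comm, Function.comp_def] using h

lemma hasDerivAt_phi (hc : 0 < c) (x : ℝ) : HasDerivAt (phi β c) (phi' β c x) x := by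
  have hd : 0 < Real.exp (x * β) + c := by positivity
  have h := ((hasDerivAt_id x).const_mul 2).fun_div ((hasDerivAt_E β x).add_const c) hd.ne'
  refine h.congr_deriv ?_
  simp [phi']

lemma hasDerivAt_phi' (hc : 0 < c) (x : ℝ) :
    HasDerivAt (phi' β c)
      (2 * β * Real.exp (x * β) *
        (x * β * (Real.exp (x * β) - c) - 2 * (Real.exp (x * β) + c)) /
        (Real.exp (x * β) + c) ^ 3) x := by
  have hd : 0 < Real.exp (x * β) + c := by positivity
  have hE := hasDerivAt_E β x
  have hnum : HasDerivAt
      (fun y : ℝ => 2 * (Real.exp (y * β) + c) - 2 * y * (β * Real.exp (y * β)))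
      (2 * (β * Real.exp (x * β)) -
        (2 * (β * Real.exp (x * β)) + 2 * x * (β * (β * Real.exp (x * β))))) x := by
    have h1 := (hE.add_const c).const_mul 2
    have h2 := (((hasDerivAt_id x).const_mul 2).fun_mul (hE.const_mul β))
    have := h1.fun_sub h2
    refine this.congr_deriv ?_
    simp only [id_eq]
    ring
  have hden : HasDerivAt (fun y : ℝ => (Real.exp (y * β) + c) ^ 2)
      (2 * (Real.exp (x * β) + c) * (β * Real.exp (x * β))) x := by
    have := (hE.add_const c).fun_pow 2
    refine this.congr_deriv ?_
    ring
  have h := hnum.fun_div hden (by positivity)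
  refine h.congr_deriv ?_
  have hd' : (Real.exp (x * β) + c) ≠ 0 := hd.ne'
  field_simp
  ring

end Aux

lemma psi_pos (β : ℝ) (hβ : 0 < β) (c : ℝ) (hc : 1 ≤ c) (lamc : ℝ) (hlc : 0 < lamc)
    (hzero : (lamc * β - 2) * Real.exp (lamc * β) = (lamc * β + 2) * c)
    {x : ℝ} (hx : lamc < x) :
    0 < (x * β - 2) * Real.exp (x * β) - (x * β + 2) * c := by
  have hc0 : 0 < c := lt_of_lt_of_le one_pos hc
  have hlb2 : 2 < lamc * β := by
    by_contra h
    push_neg at h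
    have h1 : (lamc * β - 2) * Real.exp (lamc * β) ≤ 0 := by
      have : lamc * β - 2 ≤ 0 := by linarith
      exact mul_nonpos_of_nonpos_of_nonneg this (Real.exp_pos _).le
    have h2 : 0 < (lamc * β + 2) * c := by positivity
    linarith [hzero ▸ h1]
  have hEc : c < Real.exp (lamc * β) := by
    by_contra h
    push_neg at h
    have h1 : (lamc * β - 2) * Real.exp (lamc * β) ≤ (lamc * β - 2) * c :=
      mul_le_mul_of_nonneg_left h (by linarith)
    have h2 : (lamc * β - 2) * c < (lamc * β + 2) * c := by nlinarith
    linarith [hzero]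
  -- ψ strictly monotone on Ici lamc
  set ψ : ℝ → ℝ := fun y => (y * β - 2) * Real.exp (y * β) - (y * β + 2) * c with hψ
  have hder : ∀ y, HasDerivAt ψ (β * ((y * β - 1) * Real.exp (y * β) - c)) y := by
    intro y
    have hE := hasDerivAt_E β y
    have h1 := (((hasDerivAt_id y).mul_const β).sub_const 2).fun_mul hE
    simp only [id_eq, one_mul] at h1
    have h2 : HasDerivAt (fun z : ℝ => (z * β + 2) * c) (β * c) y := by
      have := ((((hasDerivAt_id y).mul_const β).add_const 2)).mul_const c
      simpa using this
    have := h1.fun_sub h2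
    refine this.congr_deriv ?_
    ring
  have hmono : StrictMonoOn ψ (Set.Ici lamc) := by
    apply strictMonoOn_of_deriv_pos (convex_Ici lamc)
    · exact (Continuous.continuousOn (by
        have : Continuous ψ := by
          apply Continuous.sub
          · exact (continuous_id.mul continuous_const |>.sub continuous_const).mul
              (Real.continuous_exp.comp (continuous_id.mul continuous_const))
          · exact ((continuous_id.mul continuous_const).add continuous_const).mul continuous_const
        exact this))
    · intro y hy
      rw [interior_Ici] at hy
      rw [(hder y).deriv]
      have hylam : lamc < y := hy
      have hyb : 2 < y * β := by
        have : lamc * β < y * β := mul_lt_mul_of_pos_right hylam hβ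
        linarith
      have hE : c < Real.exp (y * β) :=
        lt_trans hEc (Real.exp_lt_exp.mpr (mul_lt_mul_of_pos_right hylam hβ))
      have h1 : 1 < y * β - 1 := by linarith
      have h2 : c < (y * β - 1) * Real.exp (y * β) := by nlinarith [Real.exp_pos (y * β)]
      exact mul_pos hβ (by linarith)
  have h0 : ψ lamc = 0 := by simp only [hψ]; linarith [hzero]
  have h3 := hmono (Set.self_mem_Ici) (Set.mem_Ici.mpr hx.le) hx
  simp only [hψ] at h3 h0
  linarith

/-- Super-additivity of early-time clustering rates: if all head strengths lie
strictly above the inflection point `λ_c` of `φ(λ) = 2λ/(e^{λβ}+n-1)` and are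
not all equal, then `Σ_h φ(λ_h) > H φ(λ̄)` where `λ̄` is the mean strength. -/
theorem superadditivity_heterogeneous_heads (β : ℝ) (hβ : 0 < β) (n : ℕ) (hn : 2 ≤ n)
    (lamc : ℝ) (hlc : 0 < lamc)
    (hzero : (lamc * β - 2) * Real.exp (lamc * β) = (lamc * β + 2) * ((n : ℝ) - 1))
    (H : ℕ) (hH : 2 ≤ H) (lam : Fin H → ℝ)
    (hgt : ∀ h, lamc < lam h)
    (hne : ∃ h h' : Fin H, lam h ≠ lam h') :
    (H : ℝ) * (2 * ((∑ h : Fin H, lam h) / H) /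
        (Real.exp (((∑ h : Fin H, lam h) / H) * β) + n - 1)) <
      ∑ h : Fin H, 2 * lam h / (Real.exp (lam h * β) + n - 1) := by
  set c : ℝ := (n : ℝ) - 1 with hcdef
  have hc1 : 1 ≤ c := by
    have : (2 : ℝ) ≤ (n : ℝ) := by exact_mod_cast hn
    simp [hcdef]; linarith
  have hc0 : 0 < c := lt_of_lt_of_le one_pos hc1
  -- strict convexity of phi on Ioi lamc
  have hconv : StrictConvexOn ℝ (Set.Ioi lamc) (phi β c) := by
    apply strictConvexOn_of_deriv2_pos (convex_Ioi lamc)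
    · exact Continuous.continuousOn (by
        apply Continuous.div
        · exact continuous_const.mul continuous_id
        · exact (Real.continuous_exp.comp (continuous_id.mul continuous_const)).add
            continuous_const
        · intro x; positivity)
    · intro x hx
      rw [interior_Ioi] at hx
      have hderiv1 : deriv (phi β c) = phi' β c := by
        funext y; exact (hasDerivAt_phi β c hc0 y).deriv
      show 0 < deriv (deriv (phi β c)) x
      rw [hderiv1, (hasDerivAt_phi' β c hc0 x).deriv]
      have hψ := psi_pos β hβ c hc1 lamc hlc hzero hx
      have hd : 0 < Real.exp (x * β) + c := by positivity
      have hnum : 0 < x * β * (Real.exp (x * β) - c) - 2 * (Real.exp (x * β) + c) := by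
        nlinarith
      positivity
  -- Jensen
  have hH0 : 0 < (H : ℝ) := by exact_mod_cast lt_of_lt_of_le two_pos hH
  obtain ⟨j, k, hjk⟩ := hne
  have hjensen := hconv.map_sum_lt (t := Finset.univ) (w := fun _ : Fin H => 1 / (H : ℝ))
    (p := lam) (fun i _ => by positivity)
    (by simp [Finset.card_univ]; field_simp)
    (fun i _ => Set.mem_Ioi.mpr (hgt i))
    ⟨j, Finset.mem_univ j, k, Finset.mem_univ k, hjk⟩
  simp only [smul_eq_mul] at hjensen
  have hsum : ∑ i : Fin H, 1 / (H : ℝ) * lam i = (∑ h : Fin H, lam h) / H := by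
    rw [← Finset.mul_sum]; ring
  rw [hsum] at hjensen
  have key : (H : ℝ) * phi β c ((∑ h : Fin H, lam h) / H) < ∑ i : Fin H, phi β c (lam i) := by
    calc (H : ℝ) * phi β c ((∑ h : Fin H, lam h) / H)
        < (H : ℝ) * ∑ i : Fin H, 1 / (H : ℝ) * phi β c (lam i) :=
          (mul_lt_mul_iff_right₀ hH0).mpr hjensen
      _ = ∑ i : Fin H, phi β c (lam i) := by
          rw [Finset.mul_sum]
          congr 1; funext i; field_simp
  have hrw : ∀ x : ℝ, phi β c x = 2 * x / (Real.exp (x * β) + n - 1) := by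
    intro x
    have : Real.exp (x * β) + c = Real.exp (x * β) + (n:ℝ) - 1 := by rw [hcdef]; ring
    rw [phi, this]
  calc (H : ℝ) * (2 * ((∑ h : Fin H, lam h) / H) /
        (Real.exp (((∑ h : Fin H, lam h) / H) * β) + n - 1))
      = (H : ℝ) * phi β c ((∑ h : Fin H, lam h) / H) := by rw [hrw]
    _ < ∑ i : Fin H, phi β c (lam i) := key
    _ = ∑ h : Fin H, 2 * lam h / (Real.exp (lam h * β) + n - 1) := by
        apply Finset.sum_congr rfl; intro i _; rw [hrw]
end

section
/- Let n ≥ 2, λ > 0, and consider the scalar ODE γ̇ = (2λ²γ/n)(1-γ)(1+(n-1)γ) with initial condition γ(0) = γ₀ ∈ (0,1). Then γ(t) is strictly increasing and stays in (0,1); moreover, while γ(t) ≤ 1/2, one has γ(t) ≥ γ₀ e^{λ²t/n}, so the time T to reach γ = 1/2 satisfies T ≤ (n/λ²) ln(1/(2γ₀)). -/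
/-- The equiangular ReLU attention ODE `γ̇ = (2λ²γ/n)(1-γ)(1+(n-1)γ)` with
`γ(0) = γ₀ ∈ (0,1)`: the solution is strictly increasing, stays in `(0,1)`,
grows at least like `γ₀ e^{λ²t/n}` while `γ ≤ 1/2`, and hence the time spent
below `1/2` is at most `(n/λ²) ln(1/(2γ₀))`. -/
theorem relu_ode_clustering_time (n : ℕ) (hn : 2 ≤ n) (lam : ℝ) (hlam : 0 < lam)
    (γ : ℝ → ℝ) (γ₀ : ℝ) (h0 : γ 0 = γ₀) (hγ₀ : γ₀ ∈ Set.Ioo (0 : ℝ) 1)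
    (hode : ∀ t : ℝ, 0 ≤ t →
      HasDerivAt γ (2 * lam ^ 2 * γ t / n * (1 - γ t) * (1 + ((n : ℝ) - 1) * γ t)) t) :
    (∀ t : ℝ, 0 ≤ t → γ t ∈ Set.Ioo (0 : ℝ) 1) ∧
    StrictMonoOn γ (Set.Ici 0) ∧
    (∀ t : ℝ, 0 ≤ t → (∀ s ∈ Set.Icc (0 : ℝ) t, γ s ≤ 1 / 2) →
      γ₀ * Real.exp (lam ^ 2 * t / n) ≤ γ t) ∧
    (∀ T : ℝ, 0 ≤ T → (∀ s ∈ Set.Icc (0 : ℝ) T, γ s ≤ 1 / 2) →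
      T ≤ ((n : ℝ) / lam ^ 2) * Real.log (1 / (2 * γ₀))) := by
  have hn' : (2:ℝ) ≤ (n:ℝ) := by exact_mod_cast hn
  have hnpos : (0:ℝ) < (n:ℝ) := by linarith
  have hlam2 : (0:ℝ) < lam ^ 2 := by positivity
  set F : ℝ → ℝ := fun x => 2 * lam ^ 2 * x / n * (1 - x) * (1 + ((n : ℝ) - 1) * x) with hF
  have hodeF : ∀ t : ℝ, 0 ≤ t → HasDerivAt γ (F (γ t)) t := hode
  have hcont : ContinuousOn γ (Set.Ici 0) := fun t ht =>
    ((hodeF t ht).continuousAt).continuousWithinAt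
  -- basic inequalities on F
  have hFnonneg : ∀ g : ℝ, 0 ≤ g → g ≤ 1 → 0 ≤ F g := by
    intro g hg0 hg1
    have h1 : (0:ℝ) ≤ 2 * lam ^ 2 * g / n := by positivity
    have h2 : (0:ℝ) ≤ 1 - g := by linarith
    have h3 : (0:ℝ) ≤ 1 + ((n:ℝ) - 1) * g := by nlinarith
    simp only [hF]
    exact mul_nonneg (mul_nonneg h1 h2) h3
  have hFpos : ∀ g : ℝ, 0 < g → g < 1 → 0 < F g := by
    intro g hg0 hg1
    have h1 : (0:ℝ) < 2 * lam ^ 2 * g / n := by positivity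
    have h2 : (0:ℝ) < 1 - g := by linarith
    have h3 : (0:ℝ) < 1 + ((n:ℝ) - 1) * g := by nlinarith
    simp only [hF]
    exact mul_pos (mul_pos h1 h2) h3
  -- F g ≤ 2λ²(1-g) for g ∈ [0,1]
  have hFupper : ∀ g : ℝ, 0 ≤ g → g ≤ 1 → F g ≤ 2 * lam ^ 2 * (1 - g) := by
    intro g hg0 hg1
    have hFeq : F g = (2 * lam ^ 2 * g * (1 - g) * (1 + ((n:ℝ) - 1) * g)) / n := by
      simp only [hF]; ring
    rw [hFeq, div_le_iff₀ hnpos]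
    nlinarith [mul_nonneg (mul_nonneg hlam2.le hg0) (sub_nonneg.2 hg1),
      mul_nonneg (sub_nonneg.2 hg1) (sub_nonneg.2 hg1),
      mul_nonneg hlam2.le (mul_nonneg (mul_nonneg (sub_nonneg.2 hg1) (sub_nonneg.2 hg1)) (by linarith : (0:ℝ) ≤ (n:ℝ) - 1)),
      mul_nonneg hlam2.le (mul_nonneg (mul_nonneg hg0 (sub_nonneg.2 hg1)) (by linarith : (0:ℝ) ≤ (n:ℝ) - 1))]
  -- F g ≥ (λ²/n) g for g ∈ [0, 1/2]
  have hFlower : ∀ g : ℝ, 0 ≤ g → g ≤ 1/2 → lam ^ 2 / n * g ≤ F g := by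
    intro g hg0 hg12
    have hFeq : F g = (2 * lam ^ 2 * g * (1 - g) * (1 + ((n:ℝ) - 1) * g)) / n := by
      simp only [hF]; ring
    have hceq : lam ^ 2 / n * g = (lam ^ 2 * g) / n := by ring
    rw [hFeq, hceq, div_le_div_iff₀ hnpos hnpos]
    nlinarith [mul_nonneg (mul_nonneg hlam2.le hg0) (by linarith : (0:ℝ) ≤ 1 - 2*g),
      mul_nonneg (mul_nonneg (mul_nonneg hlam2.le hg0) hg0) (by linarith : (0:ℝ) ≤ (n:ℝ) - 1),
      mul_nonneg (mul_nonneg (mul_nonneg (mul_nonneg hlam2.le hg0) hg0) (by linarith : (0:ℝ) ≤ (n:ℝ) - 1)) (by linarith : (0:ℝ) ≤ 1 - 2*g),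
      mul_nonneg hnpos.le hg0]
  -- Part 1: invariance of (0,1)
  have part1 : ∀ t : ℝ, 0 ≤ t → γ t ∈ Set.Ioo (0 : ℝ) 1 := by
    by_contra hcon
    push_neg at hcon
    obtain ⟨t', ht', hnot'⟩ := hcon
    set A : Set ℝ := {t : ℝ | 0 ≤ t ∧ γ t ∉ Set.Ioo (0:ℝ) 1} with hA
    have hAne : A.Nonempty := ⟨t', ht', hnot'⟩
    have hAbdd : BddBelow A := ⟨0, fun x hx => hx.1⟩
    set t₁ : ℝ := sInf A with ht₁def
    have ht₁0 : 0 ≤ t₁ := le_csInf hAne fun x hx => hx.1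
    -- γ t₁ ∉ Ioo 0 1
    have ht₁mem : γ t₁ ∉ Set.Ioo (0:ℝ) 1 := by
      intro hmem
      have hca : ContinuousAt γ t₁ := (hodeF t₁ ht₁0).continuousAt
      have hev : ∀ᶠ s in nhds t₁, γ s ∈ Set.Ioo (0:ℝ) 1 :=
        hca.eventually_mem (isOpen_Ioo.mem_nhds hmem)
      rw [Metric.eventually_nhds_iff] at hev
      obtain ⟨ε, hε, hball⟩ := hev
      obtain ⟨a, haA, halt⟩ := Real.lt_sInf_add_pos hAne hε
      have hta : t₁ ≤ a := csInf_le hAbdd haA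
      have : γ a ∈ Set.Ioo (0:ℝ) 1 := by
        apply hball
        rw [Real.dist_eq, abs_lt]
        constructor <;> simp only [ht₁def] at * <;> linarith
      exact haA.2 this
    have ht₁pos : 0 < t₁ := by
      rcases lt_or_eq_of_le ht₁0 with h | h
      · exact h
      · exfalso; apply ht₁mem; rw [← h, h0]; exact hγ₀
    -- before t₁, γ ∈ (0,1)
    have hbefore : ∀ s : ℝ, 0 ≤ s → s < t₁ → γ s ∈ Set.Ioo (0:ℝ) 1 := by
      intro s hs0 hst
      by_contra hns
      exact absurd (csInf_le hAbdd ⟨hs0, hns⟩) (not_le.2 hst)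
    -- γ t₁ ∈ [0,1]
    have ht₁Icc : γ t₁ ∈ Set.Icc (0:ℝ) 1 := by
      have hca : ContinuousAt γ t₁ := (hodeF t₁ ht₁0).continuousAt
      have htd : Filter.Tendsto γ (nhdsWithin t₁ (Set.Iio t₁)) (nhds (γ t₁)) :=
        hca.continuousWithinAt.tendsto
      apply isClosed_Icc.mem_of_tendsto htd
      have hIoo : Set.Ioo (max 0 (t₁ - 1)) t₁ ∈ nhdsWithin t₁ (Set.Iio t₁) := by
        apply mem_nhdsWithin.2
        exact ⟨Set.Ioi (max 0 (t₁ - 1)), isOpen_Ioi, by simp only [Set.mem_Ioi, max_lt_iff]; exact ⟨ht₁pos, by linarith⟩,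
          fun x hx => ⟨hx.1, hx.2⟩⟩
      filter_upwards [hIoo] with s hs
      have := hbefore s (le_trans (le_max_left 0 _) hs.1.le) hs.2
      exact ⟨this.1.le, this.2.le⟩
    -- on [0, t₁], γ ∈ [0,1]
    have hIcc : ∀ s ∈ Set.Icc (0:ℝ) t₁, γ s ∈ Set.Icc (0:ℝ) 1 := by
      intro s hs
      rcases lt_or_eq_of_le hs.2 with h | h
      · have := hbefore s hs.1 h; exact ⟨this.1.le, this.2.le⟩
      · rw [h]; exact ht₁Icc
    have hsub : Set.Icc (0:ℝ) t₁ ⊆ Set.Ici 0 := fun x hx => hx.1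
    have hintsub : interior (Set.Icc (0:ℝ) t₁) ⊆ Set.Ioo 0 t₁ := by
      rw [interior_Icc]
    -- γ t₁ = 0 or 1
    have hcase : γ t₁ = 0 ∨ γ t₁ = 1 := by
      rcases lt_or_eq_of_le ht₁Icc.1 with h | h
      · rcases lt_or_eq_of_le ht₁Icc.2 with h2 | h2
        · exact absurd ⟨h, h2⟩ ht₁mem
        · exact Or.inr h2
      · exact Or.inl h.symm
    rcases hcase with hz | ho
    · -- γ t₁ = 0: but γ is monotone on [0,t₁]
      have hmono : MonotoneOn γ (Set.Icc 0 t₁) := by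
        apply monotoneOn_of_deriv_nonneg (convex_Icc 0 t₁) (hcont.mono hsub)
        · intro x hx
          have hx' := hintsub hx
          exact ((hodeF x hx'.1.le).differentiableAt).differentiableWithinAt
        · intro x hx
          have hx' := hintsub hx
          rw [(hodeF x hx'.1.le).deriv]
          have := hIcc x ⟨hx'.1.le, hx'.2.le⟩
          exact hFnonneg _ this.1 this.2
      have := hmono ⟨le_refl 0, ht₁0⟩ ⟨ht₁0, le_refl t₁⟩ ht₁0
      rw [h0, hz] at this
      linarith [hγ₀.1]
    · -- γ t₁ = 1: consider w s = (1 - γ s) exp(2λ² s)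
      set w : ℝ → ℝ := fun s => (1 - γ s) * Real.exp (2 * lam ^ 2 * s) with hw
      have hwderiv : ∀ s : ℝ, 0 ≤ s → HasDerivAt w
          ((-(F (γ s))) * Real.exp (2 * lam ^ 2 * s)
            + (1 - γ s) * (Real.exp (2 * lam ^ 2 * s) * (2 * lam ^ 2))) s := by
        intro s hs
        have h1 : HasDerivAt (fun s => 1 - γ s) (-(F (γ s))) s := by
          exact (hodeF s hs).const_sub 1
        have h2 : HasDerivAt (fun s => Real.exp (2 * lam ^ 2 * s))
            (Real.exp (2 * lam ^ 2 * s) * (2 * lam ^ 2)) s := by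
          have := ((hasDerivAt_id s).const_mul (2 * lam ^ 2)).exp
          simpa using this
        exact h1.mul h2
      have hwmono : MonotoneOn w (Set.Icc 0 t₁) := by
        apply monotoneOn_of_deriv_nonneg (convex_Icc 0 t₁)
        · intro x hx
          exact ((hwderiv x hx.1).continuousAt).continuousWithinAt
        · intro x hx
          have hx' := hintsub hx
          exact ((hwderiv x hx'.1.le).differentiableAt).differentiableWithinAt
        · intro x hx
          have hx' := hintsub hx
          rw [(hwderiv x hx'.1.le).deriv]
          have hgx := hIcc x ⟨hx'.1.le, hx'.2.le⟩
          have hFle := hFupper _ hgx.1 hgx.2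
          have hexp : (0:ℝ) < Real.exp (2 * lam ^ 2 * x) := Real.exp_pos _
          nlinarith
      have hw0 : w 0 = 1 - γ₀ := by simp [hw, h0]
      have hwt₁ : w t₁ = 0 := by simp [hw, ho]
      have := hwmono ⟨le_refl 0, ht₁0⟩ ⟨ht₁0, le_refl t₁⟩ ht₁0
      rw [hw0, hwt₁] at this
      linarith [hγ₀.2]
  -- Part 2: strict monotonicity
  have part2 : StrictMonoOn γ (Set.Ici 0) := by
    apply strictMonoOn_of_deriv_pos (convex_Ici 0) hcont
    intro x hx
    rw [interior_Ici] at hx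
    rw [(hodeF x hx.le).deriv]
    have := part1 x hx.le
    exact hFpos _ this.1 this.2
  -- Part 3: exponential lower bound
  have part3 : ∀ t : ℝ, 0 ≤ t → (∀ s ∈ Set.Icc (0 : ℝ) t, γ s ≤ 1 / 2) →
      γ₀ * Real.exp (lam ^ 2 * t / n) ≤ γ t := by
    intro t ht hhalf
    set c : ℝ := lam ^ 2 / n with hc
    set u : ℝ → ℝ := fun s => γ s * Real.exp (-(c * s)) with hu
    have huderiv : ∀ s : ℝ, 0 ≤ s → HasDerivAt u
        (F (γ s) * Real.exp (-(c * s)) + γ s * (Real.exp (-(c * s)) * (-c))) s := by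
      intro s hs
      have h2 : HasDerivAt (fun s => Real.exp (-(c * s))) (Real.exp (-(c * s)) * (-c)) s := by
        have : HasDerivAt (fun s : ℝ => -(c * s)) (-c) s := by
          have := ((hasDerivAt_id' s).const_mul c).neg; rwa [mul_one] at this
        simpa using this.exp
      exact (hodeF s hs).mul h2
    have humono : MonotoneOn u (Set.Icc 0 t) := by
      apply monotoneOn_of_deriv_nonneg (convex_Icc 0 t)
      · intro x hx
        exact ((huderiv x hx.1).continuousAt).continuousWithinAt
      · intro x hx
        rw [interior_Icc] at hx
        exact ((huderiv x hx.1.le).differentiableAt).differentiableWithinAt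
      · intro x hx
        rw [interior_Icc] at hx
        rw [(huderiv x hx.1.le).deriv]
        have hgx := part1 x hx.1.le
        have hhx := hhalf x ⟨hx.1.le, hx.2.le⟩
        have hFge := hFlower _ hgx.1.le hhx
        have hexp : (0:ℝ) < Real.exp (-(c * x)) := Real.exp_pos _
        nlinarith
    have hkey : u 0 ≤ u t := humono ⟨le_refl 0, ht⟩ ⟨ht, le_refl t⟩ ht
    have hu0 : u 0 = γ₀ := by simp [hu, h0]
    rw [hu0] at hkey
    have hexp : (0:ℝ) < Real.exp (-(c * t)) := Real.exp_pos _
    have harg : lam ^ 2 * t / n = c * t := by rw [hc]; ring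
    rw [harg]
    calc γ₀ * Real.exp (c * t) ≤ (γ t * Real.exp (-(c * t))) * Real.exp (c * t) := by
          apply mul_le_mul_of_nonneg_right hkey (Real.exp_pos _).le
      _ = γ t := by rw [mul_assoc, ← Real.exp_add]; simp
  refine ⟨part1, part2, part3, ?_⟩
  -- Part 4: time bound
  intro T hT hhalf
  have hbound := part3 T hT hhalf
  have hTγ := hhalf T ⟨hT, le_refl T⟩
  have hγ0pos := hγ₀.1
  have hexp_le : Real.exp (lam ^ 2 * T / n) ≤ 1 / (2 * γ₀) := by
    rw [le_div_iff₀ (by linarith : (0:ℝ) < 2 * γ₀)]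
    nlinarith [Real.exp_pos (lam ^ 2 * T / n)]
  have hlog : lam ^ 2 * T / n ≤ Real.log (1 / (2 * γ₀)) := by
    have := Real.log_le_log (Real.exp_pos _) hexp_le
    rwa [Real.log_exp] at this
  have hn2 : (0:ℝ) < lam ^ 2 / n := by positivity
  calc T = ((n:ℝ) / lam ^ 2) * (lam ^ 2 * T / n) := by field_simp
    _ ≤ ((n:ℝ) / lam ^ 2) * Real.log (1 / (2 * γ₀)) := by
        apply mul_le_mul_of_nonneg_left hlog (by positivity)
end

section
/- Let s : J → R be time-dependent scores on a finite set with softmax weights p_j = e^{βs_j}/Z. If the scores take exactly two values — the self-score s_i = λ with ṡ_i = 0, and cross-scores s_j = λγ with common ṡ_j = λγ̇ > 0 for j ≠ i, where γ ∈ (0,1), λ > 0, γ̇ > 0 — then the entropy H = -Σ_j p_j log p_j satisfies dH/dt = β² p_i(1-p_i) λ²(1-γ)γ̇ > 0; in particular entropy is strictly increasing. -/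
/-!
For softmax weights `p = softmax β s` one has `H = log Z - β ∑ p_j s_j`, and along a path of
scores `ṗ_j = β p_j (ṡ_j - ∑ p_k ṡ_k)`; together these give `dH/dt = -β² Cov_p(s, ṡ)`.
When the scores are `λ` (at rest) at `i` and `λγ` (velocity `λγ̇`) elsewhere, the covariance is
`-p_i (1 - p_i) λ (1 - γ) λγ̇`, which is negative because `0 < p_i < 1` and `γ < 1`.
-/

open Real Finset

section Softmax

variable {ι : Type*} [Fintype ι]

noncomputable def softmax (β : ℝ) (s : ι → ℝ) (j : ι) : ℝ :=
  exp (β * s j) / ∑ k, exp (β * s k)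

def weightedCov (p f g : ι → ℝ) : ℝ :=
  ∑ j, p j * f j * g j - (∑ j, p j * f j) * ∑ j, p j * g j

lemma sum_exp_pos [Nonempty ι] (β : ℝ) (s : ι → ℝ) : 0 < ∑ k, exp (β * s k) :=
  Finset.sum_pos (fun _ _ => exp_pos _) univ_nonempty

lemma softmax_pos [Nonempty ι] (β : ℝ) (s : ι → ℝ) (j : ι) : 0 < softmax β s j :=
  div_pos (exp_pos _) (sum_exp_pos β s)

lemma softmax_lt_one {i j : ι} (hji : j ≠ i) (β : ℝ) (s : ι → ℝ) :
    softmax β s i < 1 :=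
  have : Nonempty ι := ⟨i⟩
  (div_lt_one (sum_exp_pos β s)).mpr <|
    single_lt_sum (f := fun k => exp (β * s k)) hji (mem_univ i) (mem_univ j) (exp_pos _)
      fun _ _ _ => (exp_pos _).le

lemma sum_softmax [Nonempty ι] (β : ℝ) (s : ι → ℝ) : ∑ j, softmax β s j = 1 := by
  simp only [softmax, ← sum_div]
  exact div_self (sum_exp_pos β s).ne'

lemma log_softmax [Nonempty ι] (β : ℝ) (s : ι → ℝ) (j : ι) :
    log (softmax β s j) = β * s j - log (∑ k, exp (β * s k)) := by
  rw [softmax, log_div (exp_pos _).ne' (sum_exp_pos β s).ne', log_exp]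

lemma entropy_softmax [Nonempty ι] (β : ℝ) (s : ι → ℝ) :
    -∑ j, softmax β s j * log (softmax β s j) =
      log (∑ k, exp (β * s k)) - β * ∑ j, softmax β s j * s j := by
  have hterm : ∀ j, softmax β s j * log (softmax β s j) =
      β * (softmax β s j * s j) - softmax β s j * log (∑ k, exp (β * s k)) := fun j => by
    rw [log_softmax]; ring
  simp only [hterm, sum_sub_distrib, ← mul_sum, ← sum_mul, sum_softmax]
  ring

section Derivatives

variable [Nonempty ι] {β t : ℝ} {s : ℝ → ι → ℝ} {s' : ι → ℝ}

lemma hasDerivAt_sum_exp (hs : ∀ j, HasDerivAt (fun τ => s τ j) (s' j) t) :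
    HasDerivAt (fun τ => ∑ k, exp (β * s τ k))
      (β * (∑ k, exp (β * s t k)) * ∑ k, softmax β (s t) k * s' k) t := by
  refine (HasDerivAt.fun_sum fun k _ => ((hs k).const_mul β).exp).congr_deriv ?_
  rw [mul_sum]
  refine sum_congr rfl fun k _ => ?_
  have hZ := (sum_exp_pos β (s t)).ne'
  simp only [softmax]
  field_simp

lemma hasDerivAt_softmax (hs : ∀ j, HasDerivAt (fun τ => s τ j) (s' j) t) (j : ι) :
    HasDerivAt (fun τ => softmax β (s τ) j)
      (β * softmax β (s t) j * (s' j - ∑ k, softmax β (s t) k * s' k)) t := by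
  have hZ := (sum_exp_pos β (s t)).ne'
  refine ((((hs j).const_mul β).exp).div (hasDerivAt_sum_exp hs) hZ).congr_deriv ?_
  simp only [softmax]
  field_simp

theorem hasDerivAt_entropy_softmax (hs : ∀ j, HasDerivAt (fun τ => s τ j) (s' j) t) :
    HasDerivAt (fun τ => -∑ j, softmax β (s τ) j * log (softmax β (s τ) j))
      (-β ^ 2 * weightedCov (softmax β (s t)) (s t) s') t := by
  simp only [entropy_softmax]
  set p := softmax β (s t)
  have hlogZ := (hasDerivAt_sum_exp (β := β) hs).log (sum_exp_pos β (s t)).ne'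
  have hmean := HasDerivAt.fun_sum fun j (_ : j ∈ univ) =>
    (hasDerivAt_softmax (β := β) hs j).mul (hs j)
  refine (hlogZ.sub (hmean.const_mul β)).congr_deriv ?_
  have hsum : ∑ j, (β * p j * (s' j - ∑ k, p k * s' k) * s t j + p j * s' j) =
      β * ∑ j, p j * s t j * s' j - β * (∑ k, p k * s' k) * (∑ j, p j * s t j) +
        ∑ j, p j * s' j := by
    rw [sum_congr rfl fun j _ => show β * p j * (s' j - ∑ k, p k * s' k) * s t j + p j * s' j =
      β * (p j * s t j * s' j) - β * (∑ k, p k * s' k) * (p j * s t j) + p j * s' j by ring,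
      sum_add_distrib, sum_sub_distrib, ← mul_sum, ← mul_sum]
  rw [hsum, weightedCov, mul_div_right_comm, mul_div_cancel_right₀ _ (sum_exp_pos β (s t)).ne']
  ring

end Derivatives

lemma sum_mul_ite [DecidableEq ι] (p : ι → ℝ) (i : ι) (a b : ℝ) :
    ∑ j, p j * (if j = i then a else b) = p i * a + (∑ j, p j - p i) * b := by
  rw [Fintype.sum_eq_add_sum_compl i, Fintype.sum_eq_add_sum_compl i p, if_pos rfl,
    sum_congr rfl fun j hj => by rw [if_neg (by simpa using hj)], ← sum_mul]
  ring

lemma weightedCov_two_valued [DecidableEq ι] {p : ι → ℝ} (hp : ∑ j, p j = 1) (i : ι)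
    (a b c : ℝ) :
    weightedCov p (fun j => if j = i then a else b) (fun j => if j = i then 0 else c) =
      -(p i * (1 - p i) * (a - b) * c) := by
  have hprod : ∀ j, p j * (if j = i then a else b) * (if j = i then 0 else c) =
      p j * (if j = i then 0 else b * c) := fun j => by split_ifs <;> ring
  simp only [weightedCov, hprod, sum_mul_ite, hp]
  ring

end Softmax

/-- Entropy strictly increases for a scalar-head equiangular attention flow:
with self-score `λ` (velocity `0`) and cross-scores `λγ(t)` (common velocity
`λγ̇ > 0`), the softmax entropy satisfies
`dH/dt = β² p_i (1-p_i) λ² (1-γ) γ̇ > 0`. -/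
theorem entropy_strictly_increasing_equiangular (n : ℕ) (hn : 2 ≤ n)
    (β lam : ℝ) (hβ : 0 < β) (hlam : 0 < lam)
    (γ : ℝ → ℝ) (γ' : ℝ) (t : ℝ) (hγ : HasDerivAt γ γ' t)
    (hγt : γ t ∈ Set.Ioo (0 : ℝ) 1) (hγ' : 0 < γ')
    (i : Fin n)
    (s : ℝ → Fin n → ℝ)
    (hscore : ∀ τ j, s τ j = if j = i then lam else lam * γ τ)
    (p : ℝ → Fin n → ℝ)
    (hp : ∀ τ j, p τ j = Real.exp (β * s τ j) / ∑ k : Fin n, Real.exp (β * s τ k)) :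
    HasDerivAt (fun τ => -∑ j : Fin n, p τ j * Real.log (p τ j))
      (β ^ 2 * p t i * (1 - p t i) * lam ^ 2 * (1 - γ t) * γ') t ∧
    0 < β ^ 2 * p t i * (1 - p t i) * lam ^ 2 * (1 - γ t) * γ' := by
  have : Nontrivial (Fin n) := Fin.nontrivial_iff_two_le.mpr hn
  obtain rfl : p = fun τ => softmax β (s τ) := funext₂ hp
  obtain rfl : s = fun τ j => if j = i then lam else lam * γ τ := funext₂ hscore
  have hs : ∀ j, HasDerivAt (fun τ => if j = i then lam else lam * γ τ)
      (if j = i then 0 else lam * γ') t := fun j => by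
    split_ifs
    exacts [hasDerivAt_const t lam, hγ.const_mul lam]
  constructor
  · convert hasDerivAt_entropy_softmax (β := β) hs using 1
    rw [weightedCov_two_valued (sum_softmax _ _)]
    ring
  · obtain ⟨j, hji⟩ := exists_ne i
    have hpi_pos := softmax_pos β (fun j => if j = i then lam else lam * γ t) i
    have hpi_lt_one := softmax_lt_one hji β (fun j => if j = i then lam else lam * γ t)
    have hγ_lt_one : 0 < 1 - γ t := sub_pos.mpr hγt.2
    positivity
end
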